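/- arXiv:1501.02901 — 4 statements merged into one kernel-verified Lean document; each statement's English description precedes it below -/
import Mathlib

section
/- Let X be a topological space, (U_i : i ∈ I) a discrete family of subsets of X, and for each i let B_i = f_i⁻¹(0) be a functionally closed set with B_i ⊆ U_i, where f_i : X → [0,1] is continuous with X \ U_i ⊆ f_i⁻¹(1). Then the union ⋃_i B_i is functionally closed in X, i.e., it is the zero set of a continuous real-valued function on X. -/
open Set Topology Ordinal

/-- A family of sets is discrete if every point has an open neighborhood
meeting at most one member of the family. -/
def DiscreteFam {X I : Type*} [TopologicalSpace X] (U : I → Set X) : Prop :=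
  ∀ x : X, ∃ V : Set X, IsOpen V ∧ x ∈ V ∧
    ∀ i j : I, (V ∩ U i).Nonempty → (V ∩ U j).Nonempty → i = j

/-- A set is functionally closed (a zero set) if it is the preimage of `{0}`
under a continuous real-valued function. -/
def FunClosed {X : Type*} [TopologicalSpace X] (F : Set X) : Prop :=
  ∃ f : X → ℝ, Continuous f ∧ F = f ⁻¹' {0}

/-- A set is functionally open if its complement is functionally closed. -/
def FunOpen {X : Type*} [TopologicalSpace X] (U : Set X) : Prop :=
  FunClosed Uᶜ

/-- The pair (α'th functionally multiplicative class, α'th functionally additive class),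
defined by transfinite recursion. -/
noncomputable def FunClassPair (X : Type*) [TopologicalSpace X] (α : Ordinal) :
    Set (Set X) × Set (Set X) :=
  if α = 0 then ({F | FunClosed F}, {U | FunOpen U})
  else
    ({ A | ∃ f : ℕ → Set X, (∀ n, ∃ β, ∃ _ : β < α, f n ∈ (FunClassPair X β).2) ∧ A = ⋂ n, f n },
     { A | ∃ f : ℕ → Set X, (∀ n, ∃ β, ∃ _ : β < α, f n ∈ (FunClassPair X β).1) ∧ A = ⋃ n, f n })
termination_by α

/-- The α'th functionally multiplicative class. -/
noncomputable def FunMul (X : Type*) [TopologicalSpace X] (α : Ordinal) : Set (Set X) :=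
  (FunClassPair X α).1

/-- The α'th functionally additive class. -/
noncomputable def FunAdd (X : Type*) [TopologicalSpace X] (α : Ordinal) : Set (Set X) :=
  (FunClassPair X α).2

/-- Functionally ambiguous sets of class α. -/
noncomputable def FunAmb {X : Type*} [TopologicalSpace X] (α : Ordinal) (A : Set X) : Prop :=
  A ∈ FunAdd X α ∧ A ∈ FunMul X α

/-- A family is strongly functionally discrete (sfd). -/
def SFDFam {X I : Type*} [TopologicalSpace X] (A : I → Set X) : Prop :=
  ∃ U : I → Set X, DiscreteFam U ∧ (∀ i, FunOpen (U i)) ∧ ∀ i, closure (A i) ⊆ U i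

/-- A collection of sets is sfd (viewed as a family indexed by itself). -/
def SFDSet {X : Type*} [TopologicalSpace X] (𝒜 : Set (Set X)) : Prop :=
  SFDFam (fun b : 𝒜 => (b : Set X))

/-- A collection of sets is a well sfd-family. -/
def WellSFDSet {X : Type*} [TopologicalSpace X] (𝒜 : Set (Set X)) : Prop :=
  ∃ U F : 𝒜 → Set X, DiscreteFam U ∧ DiscreteFam F ∧
    (∀ b, FunOpen (U b)) ∧ (∀ b, FunClosed (F b)) ∧
    ∀ b : 𝒜, (b : Set X) ⊆ F b ∧ F b ⊆ U b

/-- An indexed family is σ-sfd if the index set splits into countably many pieces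
on each of which the family is sfd. -/
def SigmaSFDFam {X I : Type*} [TopologicalSpace X] (A : I → Set X) : Prop :=
  ∃ J : ℕ → Set I, (∀ n, SFDFam (fun i : J n => A i)) ∧ (⋃ n, J n) = Set.univ

/-- `B` is a base for the mapping `f`: every preimage of an open set is a union
of members of `B`. -/
def IsBaseFor {X Y : Type*} [TopologicalSpace X] [TopologicalSpace Y]
    (B : Set (Set X)) (f : X → Y) : Prop :=
  ∀ V : Set Y, IsOpen V → ∃ S ⊆ B, f ⁻¹' V = ⋃₀ S

/-- `f` has a σ-strongly-functionally-discrete base. -/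
def SigmaSFD {X Y : Type*} [TopologicalSpace X] [TopologicalSpace Y] (f : X → Y) : Prop :=
  ∃ B : ℕ → Set (Set X), (∀ n, SFDSet (B n)) ∧ IsBaseFor (⋃ n, B n) f

/-- `f` has a σ-sfd base consisting of functionally ambiguous sets of class α. -/
noncomputable def SigmaSFDAmb {X Y : Type*} [TopologicalSpace X] [TopologicalSpace Y]
    (α : Ordinal) (f : X → Y) : Prop :=
  ∃ B : ℕ → Set (Set X), (∀ n, SFDSet (B n)) ∧ (∀ n, ∀ b ∈ B n, FunAmb α b) ∧
    IsBaseFor (⋃ n, B n) f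

/-- `f` belongs to the α'th functionally Lebesgue class. -/
noncomputable def LebClass {X Y : Type*} [TopologicalSpace X] [TopologicalSpace Y]
    (α : Ordinal) (f : X → Y) : Prop :=
  ∀ V : Set Y, IsOpen V → f ⁻¹' V ∈ FunAdd X α

/-- `Y` has a σ-disjoint base. -/
def SigmaDisjointBase (Y : Type*) [TopologicalSpace Y] : Prop :=
  ∃ V : ℕ → Set (Set Y), (∀ m, (V m).PairwiseDisjoint id) ∧
    TopologicalSpace.IsTopologicalBasis (⋃ m, V m)

/-!
The union of the zero sets is the zero set of `x ↦ ∏ᶠ i, f i x`. Since `f i = 1` off `U i` and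
a discrete family is locally finite, near every point only finitely many factors differ from `1`,
so the product is locally a finite product of continuous functions, hence continuous, and it
vanishes exactly where one of its factors does.
-/

open Function

theorem DiscreteFam.locallyFinite {X I : Type*} [TopologicalSpace X] {U : I → Set X}
    (hU : DiscreteFam U) : LocallyFinite U := by
  intro x
  obtain ⟨V, hVopen, hxV, hV⟩ := hU x
  refine ⟨V, hVopen.mem_nhds hxV, Subsingleton.finite fun i hi j hj => ?_⟩
  exact hV i j (inter_comm V (U i) ▸ hi) (inter_comm V (U j) ▸ hj)

theorem finprod_eq_zero_iff_of_hasFiniteMulSupport {α M₀ : Type*} [CommMonoidWithZero M₀]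
    [NoZeroDivisors M₀] [Nontrivial M₀] {f : α → M₀} (hf : HasFiniteMulSupport f) :
    ∏ᶠ i, f i = 0 ↔ ∃ i, f i = 0 := by
  refine ⟨fun h => ?_, fun ⟨i, hi⟩ => finprod_eq_zero f i hi hf⟩
  rw [finprod_eq_prod f hf, Finset.prod_eq_zero_iff] at h
  obtain ⟨i, -, hi⟩ := h
  exact ⟨i, hi⟩

theorem funClosed_iUnion_zero_of_locallyFinite {X I : Type*} [TopologicalSpace X]
    {f : I → X → ℝ} (hcont : ∀ i, Continuous (f i))
    (hf : LocallyFinite fun i => mulSupport (f i)) :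
    FunClosed (⋃ i, f i ⁻¹' {0}) := by
  refine ⟨fun x => ∏ᶠ i, f i x, continuous_finprod hcont hf, ?_⟩
  ext x
  have hfin : HasFiniteMulSupport fun i => f i x := hf.point_finite x
  simp only [mem_iUnion, mem_preimage, mem_singleton_iff,
    finprod_eq_zero_iff_of_hasFiniteMulSupport hfin]

theorem stmt1_general {X I : Type*} [TopologicalSpace X] (U : I → Set X) (f : I → X → ℝ)
    (hdisc : DiscreteFam U) (hcont : ∀ i, Continuous (f i))
    (hone : ∀ i, ∀ x ∉ U i, f i x = 1) :
    FunClosed (⋃ i, f i ⁻¹' {0}) := by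
  have hsupp : ∀ i, mulSupport (f i) ⊆ U i := fun i =>
    mulSupport_subset_iff'.mpr (hone i)
  exact funClosed_iUnion_zero_of_locallyFinite hcont (hdisc.locallyFinite.subset hsupp)

theorem stmt1 {X I : Type*} [TopologicalSpace X] (U : I → Set X) (f : I → X → ℝ)
    (hdisc : DiscreteFam U) (hcont : ∀ i, Continuous (f i))
    (hrange : ∀ i x, f i x ∈ Set.Icc (0 : ℝ) 1)
    (hone : ∀ i, ∀ x ∉ U i, f i x = 1)
    (hsub : ∀ i, f i ⁻¹' {0} ⊆ U i) :
    FunClosed (⋃ i, f i ⁻¹' {0}) :=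
  stmt1_general U f hdisc hcont hone
end

section
/- Let X be a topological space and (U_i : i ∈ I) a locally finite family of functionally open sets in X. If (B_i : i ∈ I) is a family with each B_i of the α'th functionally additive class and B_i ⊆ U_i for each i, then ⋃_i B_i is of the α'th functionally additive class. The same holds with 'functionally multiplicative' in place of 'functionally additive'. -/
open Set Topology Ordinal

/-!
Induction on `α`. At level `0` the union is the cozero set of the locally finite sum of the `|f i|`
(additive case), resp. the zero set of the locally finite product of the functions
`|f i| / (|f i| + |u i|)`, which vanish exactly on `B i` and equal `1` off `U i` (multiplicative
case). A level `0 < α < ω₁` has a monotone cofinal sequence `a n`, and every set of class `α` can be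
written with its `n`-th piece of class `a n`; this makes the pieces uniform in `i`, so the union
over `i` can be taken piecewise. For intersections the pieces are first made decreasing and
contained in `U i`; then point-finiteness of `U` gives `⋃ i, ⋂ n, G i n = ⋂ n, ⋃ i, G i n`.
-/

structure IsCofinalSeq (α : Ordinal) (a : ℕ → Ordinal) : Prop where
  monotone : Monotone a
  lt : ∀ n, a n < α
  cofinal : ∀ β < α, ∃ n, β ≤ a n

theorem exists_isCofinalSeq {α : Ordinal} (hα0 : α ≠ 0) (hα : α < ω₁) :
    ∃ a, IsCofinalSeq α a := by
  have hcount : (Iio α).Countable := by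
    rw [← Cardinal.le_aleph0_iff_set_countable, Cardinal.mk_Iio_ordinal, Cardinal.lift_le_aleph0,
      ← Cardinal.lt_aleph_one_iff, ← Cardinal.lt_omega_iff_card_lt]
    exact hα
  obtain ⟨b, hb⟩ := hcount.exists_eq_range ⟨0, pos_iff_ne_zero.2 hα0⟩
  have hb_lt : ∀ n, b n < α := fun n => (hb ▸ mem_range_self n : b n ∈ Iio α)
  refine ⟨partialSups b, (partialSups b).monotone, fun n => ?_, fun β hβ => ?_⟩
  · exact (partialSups_iff_forall (· < α) sup_lt_iff).2 fun k _ => hb_lt k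
  · obtain ⟨n, rfl⟩ : β ∈ range b := hb ▸ hβ
    exact ⟨n, le_partialSups b n⟩

theorem IsCofinalSeq.ne_zero {α : Ordinal} {a : ℕ → Ordinal} (ha : IsCofinalSeq α a) : α ≠ 0 :=
  (pos_of_gt (ha.lt 0)).ne'

theorem exists_reindex_mem_levels {β : Type*} {S : ℕ → Set β} (hS : Monotone S) {e : β}
    (he : ∀ k, e ∈ S k) {f : ℕ → β} {m : ℕ → ℕ} (hf : ∀ n, f n ∈ S (m n)) :
    ∃ C : ℕ → β, (∀ k, C k ∈ S k) ∧ range f ⊆ range C ∧ range C ⊆ insert e (range f) := by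
  classical
  -- `f n` goes to position `Nat.pair n (m n) ≥ m n`; the other positions hold `e`.
  refine ⟨fun k => if m k.unpair.1 ≤ k then f k.unpair.1 else e, fun k => ?_, ?_, ?_⟩
  · dsimp only
    split_ifs with h
    exacts [hS h (hf _), he k]
  · rintro _ ⟨n, rfl⟩
    exact ⟨Nat.pair n (m n), by simp [Nat.right_le_pair]⟩
  · rintro _ ⟨k, rfl⟩
    dsimp only
    split_ifs
    exacts [Or.inr (mem_range_self _), Or.inl rfl]

theorem Set.iUnion_iInter_eq_iInter_iUnion_of_antitone {α ι : Type*} {G : ι → ℕ → Set α}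
    (hG : ∀ i, Antitone (G i)) (hfin : ∀ x, {i | x ∈ G i 0}.Finite) :
    ⋃ i, ⋂ n, G i n = ⋂ n, ⋃ i, G i n := by
  refine iUnion_iInter_subset.antisymm fun x hx => ?_
  by_contra! hx'
  simp only [mem_iUnion, mem_iInter, not_exists, not_forall] at hx'
  choose N hN using hx'
  obtain ⟨M, hM⟩ := ((hfin x).image N).bddAbove
  obtain ⟨i, hi⟩ := mem_iUnion.1 (mem_iInter.1 hx M)
  exact hN i (hG i (hM ⟨i, hG i (Nat.zero_le M) hi, rfl⟩) hi)

section FunctionalClasses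

open Function

variable {X : Type*} [TopologicalSpace X]

theorem funClosed_empty : FunClosed (∅ : Set X) :=
  ⟨1, continuous_const, by ext; simp⟩

theorem funOpen_univ : FunOpen (univ : Set X) := by
  simpa [FunOpen] using funClosed_empty

theorem funClosed_setOf_le {f g : X → ℝ} (hf : Continuous f) (hg : Continuous g) :
    FunClosed {x | f x ≤ g x} :=
  ⟨fun x => max (f x - g x) 0, by fun_prop, by ext; simp⟩

theorem FunClosed.inter {F G : Set X} (hF : FunClosed F) (hG : FunClosed G) :
    FunClosed (F ∩ G) := by
  obtain ⟨f, hf, rfl⟩ := hF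
  obtain ⟨g, hg, rfl⟩ := hG
  refine ⟨fun x => |f x| + |g x|, by fun_prop, ?_⟩
  ext x
  simp [add_eq_zero_iff_of_nonneg (abs_nonneg (f x)) (abs_nonneg (g x))]

theorem FunOpen.inter {U V : Set X} (hU : FunOpen U) (hV : FunOpen V) : FunOpen (U ∩ V) := by
  obtain ⟨f, hf, hfU⟩ := hU
  obtain ⟨g, hg, hgV⟩ := hV
  refine ⟨f * g, hf.mul hg, ?_⟩
  rw [compl_inter, hfU, hgV]
  ext x
  simp [mul_eq_zero]

theorem Real.ne_zero_iff_exists_one_div_le {r : ℝ} : r ≠ 0 ↔ ∃ n : ℕ, 1 / (n + 1 : ℝ) ≤ |r| := by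
  refine ⟨fun hr => ?_, fun ⟨n, hn⟩ hr => ?_⟩
  · obtain ⟨n, hn⟩ := exists_nat_one_div_lt (abs_pos.2 hr)
    exact ⟨n, hn.le⟩
  · rw [hr, abs_zero] at hn
    exact hn.not_gt Nat.one_div_pos_of_nat

theorem FunOpen.eq_iUnion_funClosed {U : Set X} (hU : FunOpen U) :
    ∃ F : ℕ → Set X, (∀ n, FunClosed (F n)) ∧ U = ⋃ n, F n := by
  obtain ⟨f, hf, hfU⟩ := hU
  refine ⟨fun n => {x | 1 / (n + 1 : ℝ) ≤ |f x|}, fun n => funClosed_setOf_le (by fun_prop)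
    (by fun_prop), ?_⟩
  rw [← compl_compl U, hfU]
  ext x
  simp [Real.ne_zero_iff_exists_one_div_le]

theorem FunClosed.eq_iInter_funOpen {F : Set X} (hF : FunClosed F) :
    ∃ V : ℕ → Set X, (∀ n, FunOpen (V n)) ∧ F = ⋂ n, V n := by
  obtain ⟨W, hW, hFW⟩ := FunOpen.eq_iUnion_funClosed (U := Fᶜ) (by rwa [FunOpen, compl_compl])
  refine ⟨fun n => (W n)ᶜ, fun n => by rw [FunOpen, compl_compl]; exact hW n, ?_⟩
  rw [← compl_iUnion, ← hFW, compl_compl]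

theorem mem_funMul_zero {A : Set X} : A ∈ FunMul X 0 ↔ FunClosed A := by
  rw [FunMul, FunClassPair]; simp

theorem mem_funAdd_zero {A : Set X} : A ∈ FunAdd X 0 ↔ FunOpen A := by
  rw [FunAdd, FunClassPair]; simp

theorem mem_funMul_of_ne_zero {α : Ordinal} (hα : α ≠ 0) {A : Set X} :
    A ∈ FunMul X α ↔ ∃ f : ℕ → Set X, (∀ n, ∃ β < α, f n ∈ FunAdd X β) ∧ A = ⋂ n, f n := by
  rw [FunMul, FunClassPair]; simp [hα, FunAdd]

theorem mem_funAdd_of_ne_zero {α : Ordinal} (hα : α ≠ 0) {A : Set X} :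
    A ∈ FunAdd X α ↔ ∃ f : ℕ → Set X, (∀ n, ∃ β < α, f n ∈ FunMul X β) ∧ A = ⋃ n, f n := by
  rw [FunAdd, FunClassPair]; simp [hα, FunMul]

theorem iInter_mem_funMul {ι : Type*} [Countable ι] [Nonempty ι] {α : Ordinal} (hα : α ≠ 0)
    {f : ι → Set X} (hf : ∀ i, ∃ β < α, f i ∈ FunAdd X β) : ⋂ i, f i ∈ FunMul X α := by
  obtain ⟨e, he⟩ := exists_surjective_nat ι
  exact (mem_funMul_of_ne_zero hα).2 ⟨f ∘ e, fun n => hf (e n), (he.iInter_comp f).symm⟩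

theorem iUnion_mem_funAdd {ι : Type*} [Countable ι] [Nonempty ι] {α : Ordinal} (hα : α ≠ 0)
    {f : ι → Set X} (hf : ∀ i, ∃ β < α, f i ∈ FunMul X β) : ⋃ i, f i ∈ FunAdd X α := by
  obtain ⟨e, he⟩ := exists_surjective_nat ι
  exact (mem_funAdd_of_ne_zero hα).2 ⟨f ∘ e, fun n => hf (e n), (he.iUnion_comp f).symm⟩

theorem FunClosed.mem_funMul {F : Set X} (hF : FunClosed F) (α : Ordinal) : F ∈ FunMul X α := by
  obtain rfl | hα := eq_or_ne α 0
  · exact mem_funMul_zero.2 hF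
  obtain ⟨V, hV, rfl⟩ := hF.eq_iInter_funOpen
  exact iInter_mem_funMul hα fun n => ⟨0, pos_iff_ne_zero.2 hα, mem_funAdd_zero.2 (hV n)⟩

theorem FunOpen.mem_funAdd {U : Set X} (hU : FunOpen U) (α : Ordinal) : U ∈ FunAdd X α := by
  obtain rfl | hα := eq_or_ne α 0
  · exact mem_funAdd_zero.2 hU
  obtain ⟨F, hF, rfl⟩ := hU.eq_iUnion_funClosed
  exact iUnion_mem_funAdd hα fun n => ⟨0, pos_iff_ne_zero.2 hα, mem_funMul_zero.2 (hF n)⟩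

theorem funMul_monotone : Monotone (FunMul X) := by
  intro β γ hβγ A hA
  obtain rfl | hβ := eq_or_ne β 0
  · exact (mem_funMul_zero.1 hA).mem_funMul γ
  obtain ⟨f, hf, rfl⟩ := (mem_funMul_of_ne_zero hβ).1 hA
  exact iInter_mem_funMul (ne_bot_of_le_ne_bot hβ hβγ)
    fun n => (hf n).imp fun δ h => ⟨h.1.trans_le hβγ, h.2⟩

theorem funAdd_monotone : Monotone (FunAdd X) := by
  intro β γ hβγ A hA
  obtain rfl | hβ := eq_or_ne β 0
  · exact (mem_funAdd_zero.1 hA).mem_funAdd γ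
  obtain ⟨f, hf, rfl⟩ := (mem_funAdd_of_ne_zero hβ).1 hA
  exact iUnion_mem_funAdd (ne_bot_of_le_ne_bot hβ hβγ)
    fun n => (hf n).imp fun δ h => ⟨h.1.trans_le hβγ, h.2⟩

theorem inter_mem_funMul {α : Ordinal} {A B : Set X} (hA : A ∈ FunMul X α)
    (hB : B ∈ FunMul X α) : A ∩ B ∈ FunMul X α := by
  obtain rfl | hα := eq_or_ne α 0
  · exact mem_funMul_zero.2 ((mem_funMul_zero.1 hA).inter (mem_funMul_zero.1 hB))
  obtain ⟨f, hf, rfl⟩ := (mem_funMul_of_ne_zero hα).1 hA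
  obtain ⟨g, hg, rfl⟩ := (mem_funMul_of_ne_zero hα).1 hB
  rw [show (⋂ n, f n) ∩ ⋂ n, g n = ⋂ p, Sum.elim f g p from
    (iInter_sum (s := Sum.elim f g)).symm]
  exact iInter_mem_funMul hα fun p => p.rec hf hg

theorem inter_mem_funAdd {α : Ordinal} {A B : Set X} (hA : A ∈ FunAdd X α)
    (hB : B ∈ FunAdd X α) : A ∩ B ∈ FunAdd X α := by
  obtain rfl | hα := eq_or_ne α 0
  · exact mem_funAdd_zero.2 ((mem_funAdd_zero.1 hA).inter (mem_funAdd_zero.1 hB))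
  obtain ⟨f, hf, rfl⟩ := (mem_funAdd_of_ne_zero hα).1 hA
  obtain ⟨g, hg, rfl⟩ := (mem_funAdd_of_ne_zero hα).1 hB
  rw [iUnion_inter_iUnion, ← iUnion_prod' fun p : ℕ × ℕ => f p.1 ∩ g p.2]
  refine iUnion_mem_funAdd hα fun p => ?_
  obtain ⟨β, hβ, hfβ⟩ := hf p.1
  obtain ⟨γ, hγ, hgγ⟩ := hg p.2
  exact ⟨max β γ, max_lt hβ hγ, inter_mem_funMul (funMul_monotone (le_max_left β γ) hfβ)
    (funMul_monotone (le_max_right β γ) hgγ)⟩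

theorem biInter_le_mem_funAdd {a : ℕ → Ordinal} (ha : Monotone a) {C : ℕ → Set X}
    (hC : ∀ n, C n ∈ FunAdd X (a n)) (n : ℕ) : ⋂ k ≤ n, C k ∈ FunAdd X (a n) := by
  induction n with
  | zero => simpa using hC 0
  | succ n ih =>
    rw [biInter_le_succ]
    exact inter_mem_funAdd (funAdd_monotone (ha n.le_succ) ih) (hC (n + 1))

theorem IsCofinalSeq.exists_iInter_of_mem_funMul {α : Ordinal} {a : ℕ → Ordinal}
    (ha : IsCofinalSeq α a) {A : Set X} (hA : A ∈ FunMul X α) :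
    ∃ C : ℕ → Set X, (∀ n, C n ∈ FunAdd X (a n)) ∧ A = ⋂ n, C n := by
  obtain ⟨f, hf, rfl⟩ := (mem_funMul_of_ne_zero ha.ne_zero).1 hA
  choose β hβ hfβ using hf
  choose m hm using fun n => ha.cofinal (β n) (hβ n)
  obtain ⟨C, hC, hfC, hCf⟩ := exists_reindex_mem_levels (S := fun k => FunAdd X (a k))
    (funAdd_monotone.comp ha.monotone) (fun k => funOpen_univ.mem_funAdd (a k))
    (fun n => funAdd_monotone (hm n) (hfβ n))
  refine ⟨C, hC, Subset.antisymm ?_ ?_⟩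
  · simpa [sInter_range, sInter_insert] using sInter_subset_sInter hCf
  · simpa [sInter_range] using sInter_subset_sInter hfC

theorem IsCofinalSeq.exists_iUnion_of_mem_funAdd {α : Ordinal} {a : ℕ → Ordinal}
    (ha : IsCofinalSeq α a) {A : Set X} (hA : A ∈ FunAdd X α) :
    ∃ C : ℕ → Set X, (∀ n, C n ∈ FunMul X (a n)) ∧ A = ⋃ n, C n := by
  obtain ⟨f, hf, rfl⟩ := (mem_funAdd_of_ne_zero ha.ne_zero).1 hA
  choose β hβ hfβ using hf
  choose m hm using fun n => ha.cofinal (β n) (hβ n)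
  obtain ⟨C, hC, hfC, hCf⟩ := exists_reindex_mem_levels (S := fun k => FunMul X (a k))
    (funMul_monotone.comp ha.monotone) (fun k => funClosed_empty.mem_funMul (a k))
    (fun n => funMul_monotone (hm n) (hfβ n))
  refine ⟨C, hC, Subset.antisymm ?_ ?_⟩
  · simpa [sUnion_range] using sUnion_mono hfC
  · simpa [sUnion_range, sUnion_insert] using sUnion_mono hCf

theorem funOpen_iUnion {ι : Type*} {V : ι → Set X} (hlf : LocallyFinite V)
    (hV : ∀ i, FunOpen (V i)) : FunOpen (⋃ i, V i) := by
  choose f hf hfV using hV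
  have hsupp : ∀ i, support (fun x => |f i x|) = V i := fun i => by
    rw [← compl_compl (V i), hfV i]; ext; simp
  refine ⟨fun x => ∑ᶠ i, |f i x|, continuous_finsum (fun i => (hf i).abs) ?_, ?_⟩
  · simpa only [hsupp] using hlf
  ext x
  have hfin : HasFiniteSupport fun i => |f i x| :=
    (hlf.point_finite x).subset fun i hi => (hsupp i).subset hi
  simp only [compl_iUnion, mem_iInter, hfV, mem_preimage, mem_singleton_iff]
  refine ⟨fun h => finsum_eq_zero_of_forall_eq_zero fun i => by simp [h i], fun h i => ?_⟩
  by_contra hi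
  exact (finsum_pos (fun j => abs_nonneg (f j x)) ⟨i, abs_pos.2 hi⟩ hfin).ne' h

theorem FunClosed.exists_zeroSet_eq_mulSupport_subset {F U : Set X} (hF : FunClosed F)
    (hU : FunOpen U) (hFU : F ⊆ U) :
    ∃ q : X → ℝ, Continuous q ∧ F = q ⁻¹' {0} ∧ mulSupport q ⊆ U := by
  obtain ⟨f, hf, rfl⟩ := hF
  obtain ⟨u, hu, hUu⟩ := hU
  have hu0 : ∀ x, u x = 0 → f x ≠ 0 := fun x hux hfx =>
    (show x ∈ Uᶜ by rw [hUu]; exact hux) (hFU hfx)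
  have hden : ∀ x, |f x| + |u x| ≠ 0 := fun x h => by
    rw [add_eq_zero_iff_of_nonneg (abs_nonneg _) (abs_nonneg _), abs_eq_zero, abs_eq_zero] at h
    exact hu0 x h.2 h.1
  refine ⟨fun x => |f x| / (|f x| + |u x|), hf.abs.div (hf.abs.add hu.abs) hden, ?_, ?_⟩
  · ext x
    simp [hden x]
  · intro x hx
    by_contra hxU
    have hux : u x = 0 := (hUu ▸ hxU : x ∈ u ⁻¹' {0})
    exact hx (by simp [hux, hu0 x hux])

theorem funClosed_iUnion {ι : Type*} {U B : ι → Set X} (hlf : LocallyFinite U)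
    (hU : ∀ i, FunOpen (U i)) (hBU : ∀ i, B i ⊆ U i) (hB : ∀ i, FunClosed (B i)) :
    FunClosed (⋃ i, B i) := by
  choose q hq hqB hqU using fun i => (hB i).exists_zeroSet_eq_mulSupport_subset (hU i) (hBU i)
  refine ⟨fun x => ∏ᶠ i, q i x, continuous_finprod hq (hlf.subset hqU), ?_⟩
  ext x
  simp only [hqB, mem_iUnion, mem_preimage, mem_singleton_iff]
  refine ⟨fun ⟨i, hi⟩ => finprod_eq_zero _ i hi ((hlf.point_finite x).subset fun j hj => hqU j hj),
    fun h => ?_⟩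
  by_contra! h'
  exact finprod_ne_zero h' h

end FunctionalClasses

def IsClosedUnderUnionsBelow {X I : Type*} (U : I → Set X) (S : Set (Set X)) : Prop :=
  ∀ B : I → Set X, (∀ i, B i ⊆ U i) → (∀ i, B i ∈ S) → ⋃ i, B i ∈ S

section LocallyFiniteUnions

variable {X I : Type*} [TopologicalSpace X] {U : I → Set X}

theorem isClosedUnderUnionsBelow_funAdd_zero (hlf : LocallyFinite U) :
    IsClosedUnderUnionsBelow U (FunAdd X 0) := fun _ hBU hB =>
  mem_funAdd_zero.2 (funOpen_iUnion (hlf.subset hBU) fun i => mem_funAdd_zero.1 (hB i))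

theorem isClosedUnderUnionsBelow_funMul_zero (hlf : LocallyFinite U) (hU : ∀ i, FunOpen (U i)) :
    IsClosedUnderUnionsBelow U (FunMul X 0) := fun _ hBU hB =>
  mem_funMul_zero.2 (funClosed_iUnion hlf hU hBU fun i => mem_funMul_zero.1 (hB i))

theorem IsCofinalSeq.isClosedUnderUnionsBelow_funAdd {α : Ordinal} {a : ℕ → Ordinal}
    (ha : IsCofinalSeq α a) (ih : ∀ n, IsClosedUnderUnionsBelow U (FunMul X (a n))) :
    IsClosedUnderUnionsBelow U (FunAdd X α) := by
  intro B hBU hB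
  choose C hC hBC using fun i => ha.exists_iUnion_of_mem_funAdd (hB i)
  have hCU : ∀ n i, C i n ⊆ U i := fun n i => (subset_iUnion (C i) n).trans (hBC i ▸ hBU i)
  rw [iUnion_congr hBC, iUnion_comm]
  exact (mem_funAdd_of_ne_zero ha.ne_zero).2
    ⟨_, fun n => ⟨a n, ha.lt n, ih n _ (hCU n) fun i => hC i n⟩, rfl⟩

theorem IsCofinalSeq.isClosedUnderUnionsBelow_funMul {α : Ordinal} {a : ℕ → Ordinal}
    (ha : IsCofinalSeq α a) (hfin : ∀ x, {i | x ∈ U i}.Finite) (hU : ∀ i, FunOpen (U i))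
    (ih : ∀ n, IsClosedUnderUnionsBelow U (FunAdd X (a n))) :
    IsClosedUnderUnionsBelow U (FunMul X α) := by
  intro B hBU hB
  choose C hC hBC using fun i => ha.exists_iInter_of_mem_funMul (hB i)
  set G : I → ℕ → Set X := fun i n => U i ∩ ⋂ k ≤ n, C i k
  have hG_anti : ∀ i, Antitone (G i) := fun i m n hmn =>
    inter_subset_inter_right _ (biInter_subset_biInter_left fun k hk => le_trans hk hmn)
  have hG_mem : ∀ n i, G i n ∈ FunAdd X (a n) := fun n i =>
    inter_mem_funAdd ((hU i).mem_funAdd _) (biInter_le_mem_funAdd ha.monotone (hC i) n)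
  have hGB : ∀ i, ⋂ n, G i n = B i := fun i => by
    have : ⋂ n, ⋂ k ≤ n, C i k = ⋂ n, C i n := by
      ext x
      simpa using ⟨fun h k => h k k le_rfl, fun h _ k _ => h k⟩
    rw [← inter_iInter, this, ← hBC i, inter_eq_right.2 (hBU i)]
  rw [← iUnion_congr hGB, iUnion_iInter_eq_iInter_iUnion_of_antitone hG_anti
    fun x => (hfin x).subset fun i hi => hi.1]
  exact (mem_funMul_of_ne_zero ha.ne_zero).2
    ⟨_, fun n => ⟨a n, ha.lt n, ih n _ (fun i => inter_subset_left) (hG_mem n)⟩, rfl⟩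

theorem isClosedUnderUnionsBelow_of_lt_omega_one (hlf : LocallyFinite U)
    (hU : ∀ i, FunOpen (U i)) {α : Ordinal} (hα : α < ω₁) :
    IsClosedUnderUnionsBelow U (FunAdd X α) ∧ IsClosedUnderUnionsBelow U (FunMul X α) := by
  induction α using WellFoundedLT.induction with
  | _ α ih =>
  obtain rfl | hα0 := eq_or_ne α 0
  · exact ⟨isClosedUnderUnionsBelow_funAdd_zero hlf, isClosedUnderUnionsBelow_funMul_zero hlf hU⟩
  obtain ⟨a, ha⟩ := exists_isCofinalSeq hα0 hα
  have ih_a := fun n => ih (a n) (ha.lt n) ((ha.lt n).trans hα)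
  exact ⟨ha.isClosedUnderUnionsBelow_funAdd fun n => (ih_a n).2,
    ha.isClosedUnderUnionsBelow_funMul hlf.point_finite hU fun n => (ih_a n).1⟩

end LocallyFiniteUnions

theorem stmt2 {X I : Type*} [TopologicalSpace X] (α : Ordinal) (hα : α < ω₁)
    (U B : I → Set X) (hlf : LocallyFinite U) (hUo : ∀ i, FunOpen (U i))
    (hsub : ∀ i, B i ⊆ U i) :
    ((∀ i, B i ∈ FunAdd X α) → (⋃ i, B i) ∈ FunAdd X α) ∧
    ((∀ i, B i ∈ FunMul X α) → (⋃ i, B i) ∈ FunMul X α) :=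
  have h := isClosedUnderUnionsBelow_of_lt_omega_one hlf hUo hα
  ⟨h.1 B hsub, h.2 B hsub⟩
end

section
/- If a mapping f : X → Y between topological spaces has a σ-sfd base, then f has a σ-sfd base B = ⋃ₙ Bₙ where each Bₙ is a well sfd-family, i.e., there exist discrete families (U_B) of functionally open sets and (F_B) of functionally closed sets with B ⊆ F_B ⊆ U_B for each B ∈ Bₙ. -/
open Set Topology Ordinal

/-! Write the functionally open set `U_B` around each member `B` of the `n`-th sfd family as
`⋃ₖ F_{B,k}` with `F_{B,k}` functionally closed. For fixed `n` and `k` the sets `B ∩ F_{B,k}` form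
a well sfd family, witnessed by `F_{B,k} ⊆ U_B`, and since `B ⊆ U_B` every `B` is the union over
`k` of these sets, so the countably many new families still form a base for `f`. -/

theorem FunOpen.exists_iUnion_funClosed {X : Type*} [TopologicalSpace X] {U : Set X}
    (hU : FunOpen U) : ∃ F : ℕ → Set X, (∀ k, FunClosed (F k)) ∧ ⋃ k, F k = U := by
  obtain ⟨g, hg, hgU⟩ := hU
  have hmem : ∀ x, x ∈ U ↔ g x ≠ 0 := fun x => by
    rw [← not_iff_not, not_not, ← mem_compl_iff, hgU, mem_preimage, mem_singleton_iff]
  refine ⟨fun k => {x | 1 / ((k : ℝ) + 1) ≤ |g x|},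
    fun k => ⟨fun x => max (1 / ((k : ℝ) + 1) - |g x|) 0, by fun_prop, ?_⟩, ?_⟩
  · ext x
    simp
  · ext x
    simp only [mem_iUnion, mem_ofPred_eq, hmem]
    constructor
    · rintro ⟨k, hk⟩ hgx
      rw [hgx, abs_zero] at hk
      exact Nat.one_div_pos_of_nat.not_ge hk
    · intro hgx
      obtain ⟨k, hk⟩ := exists_nat_one_div_lt (abs_pos.2 hgx)
      exact ⟨k, hk.le⟩

theorem DiscreteFam.mono {X I : Type*} [TopologicalSpace X] {U A : I → Set X}
    (hU : DiscreteFam U) (hAU : ∀ i, A i ⊆ U i) : DiscreteFam A := by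
  intro x
  obtain ⟨V, hVo, hxV, hV⟩ := hU x
  exact ⟨V, hVo, hxV, fun i j hi hj =>
    hV i j (hi.mono (inter_subset_inter_right _ (hAU i)))
      (hj.mono (inter_subset_inter_right _ (hAU j)))⟩

theorem DiscreteFam.comp_injective {X I J : Type*} [TopologicalSpace X] {U : I → Set X}
    (hU : DiscreteFam U) {e : J → I} (he : e.Injective) : DiscreteFam (U ∘ e) := by
  intro x
  obtain ⟨V, hVo, hxV, hV⟩ := hU x
  exact ⟨V, hVo, hxV, fun i j hi hj => he (hV _ _ hi hj)⟩

theorem wellSFDSet_range {X I : Type*} [TopologicalSpace X] {A U F : I → Set X}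
    (hU : DiscreteFam U) (hUo : ∀ i, FunOpen (U i)) (hFc : ∀ i, FunClosed (F i))
    (hAF : ∀ i, A i ⊆ F i) (hFU : ∀ i, F i ⊆ U i) : WellSFDSet (range A) := by
  have hs := rangeSplitting_injective A
  refine ⟨U ∘ rangeSplitting A, F ∘ rangeSplitting A, hU.comp_injective hs,
    (hU.mono hFU).comp_injective hs, fun b => hUo _, fun b => hFc _, fun b => ⟨?_, hFU _⟩⟩
  simpa only [Function.comp_apply, apply_rangeSplitting] using hAF (rangeSplitting A b)

theorem IsBaseFor.of_forall_eq_sUnion {X Y : Type*} [TopologicalSpace X] [TopologicalSpace Y]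
    {B C : Set (Set X)} {f : X → Y} (hB : IsBaseFor B f)
    (hBC : ∀ b ∈ B, ∃ S ⊆ C, b = ⋃₀ S) : IsBaseFor C f := by
  intro V hV
  obtain ⟨T, hTB, hT⟩ := hB V hV
  choose S hSC hS using fun b : T => hBC b (hTB b.2)
  refine ⟨⋃ b, S b, iUnion_subset hSC, ?_⟩
  rw [hT, sUnion_iUnion, sUnion_eq_iUnion]
  exact iUnion_congr fun b => hS b

theorem stmt6 {X Y : Type*} [TopologicalSpace X] [TopologicalSpace Y]
    (f : X → Y) (hf : SigmaSFD f) :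
    ∃ B : ℕ → Set (Set X), (∀ n, WellSFDSet (B n)) ∧ IsBaseFor (⋃ n, B n) f := by
  obtain ⟨B, hsfd, hbase⟩ := hf
  choose U hU hUo hBU using hsfd
  choose F hFc hFU using fun n (b : B n) => (hUo n b).exists_iUnion_funClosed
  set C : ℕ × ℕ → Set (Set X) := fun p => range fun b : B p.1 => ↑b ∩ F p.1 b p.2
  have hC : ∀ p, WellSFDSet (C p) := fun p =>
    wellSFDSet_range (hU p.1) (hUo p.1) (fun b => hFc p.1 b p.2) (fun _ => inter_subset_right)
      (fun b => (subset_iUnion _ p.2).trans (hFU p.1 b).subset)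
  refine ⟨C ∘ Nat.pairEquiv.symm, fun m => hC _, hbase.of_forall_eq_sUnion fun b hb => ?_⟩
  rw [Function.comp_def, Nat.pairEquiv.symm.surjective.iUnion_comp C]
  obtain ⟨n, hbn⟩ := mem_iUnion.1 hb
  refine ⟨range fun k => b ∩ F n ⟨b, hbn⟩ k, ?_, ?_⟩
  · rintro _ ⟨k, rfl⟩
    exact mem_iUnion.2 ⟨(n, k), ⟨b, hbn⟩, rfl⟩
  · rw [sUnion_range, ← inter_iUnion, hFU]
    exact (inter_eq_left.2 (subset_closure.trans (hBU n ⟨b, hbn⟩))).symm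
end

section
/- Let X be a topological space, Y a perfectly normal space, 0 ≤ α < ω₁, and let (fₙ) be a sequence of mappings of the α'th functionally Lebesgue class (preimages of open sets belong to the α'th functionally additive class) converging pointwise to f : X → Y. Then f is of the (α+1)'th functionally Lebesgue class; in particular, for every closed F ⊆ Y written as F = ⋂ₙ Gₙ = ⋂ₙ closure(Gₙ) with Gₙ open decreasing, one has f⁻¹(F) = ⋂ₙ ⋃_{k>n} f_k⁻¹(Gₙ), a set of the (α+1)'th functionally multiplicative class. -/
open Set Topology Ordinal

/-!
If `fₙ → g` pointwise and the closed set `F` is `⋂ Gₙ = ⋂ closure Gₙ` with `Gₙ` open and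
decreasing, then `g x ∈ F` iff for every `n` some `f_k x` with `k > n` lies in `Gₙ`. Each
`⋃_{k>n} f_k⁻¹ Gₙ` is of additive class `α`, so `g⁻¹ F` is of multiplicative class `α + 1`.
In a perfectly normal space every closed set is a zero set `φ⁻¹{0}`, which has such a
representation with `Gₙ = {|φ| < 1/(n+1)}`; passing to complements gives the Lebesgue class.
-/

section FunClosed

variable {X Y : Type*} [TopologicalSpace X] [TopologicalSpace Y]

theorem FunClosed.preimage {s : Set Y} (hs : FunClosed s) {Φ : X → Y} (hΦ : Continuous Φ) :
    FunClosed (Φ ⁻¹' s) := by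
  obtain ⟨φ, hφ, rfl⟩ := hs
  exact ⟨φ ∘ Φ, hφ.comp hΦ, rfl⟩

theorem IsClosed.funClosed [PerfectlyNormalSpace Y] {s : Set Y} (hs : IsClosed s) :
    FunClosed s := by
  obtain ⟨φ, rfl, -⟩ := perfectlyNormalSpace_iff_forall_isClosed_preimage_zero.1 ‹_› s hs
  exact ⟨φ, φ.continuous, rfl⟩

/-- The zero sets `φₙ⁻¹{0}` are pulled back from `{0} ⊆ ℕ → ℝ`, a closed subset of a
metrizable, hence perfectly normal, space. -/
theorem FunClosed.iInter {s : ℕ → Set X} (hs : ∀ n, FunClosed (s n)) :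
    FunClosed (⋂ n, s n) := by
  choose φ hφ hs using hs
  have h : (⋂ n, s n) = (fun x n => φ n x) ⁻¹' {0} := by
    ext x
    simp [hs, funext_iff]
  rw [h]
  exact isClosed_singleton.funClosed.preimage (continuous_pi hφ)

theorem FunOpen.iUnion {s : ℕ → Set X} (hs : ∀ n, FunOpen (s n)) : FunOpen (⋃ n, s n) := by
  rw [FunOpen, compl_iUnion]
  exact FunClosed.iInter hs

theorem FunClosed.exists_antitone_isOpen {s : Set Y} (hs : FunClosed s) :
    ∃ G : ℕ → Set Y, (∀ n, IsOpen (G n)) ∧ Antitone G ∧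
      s = ⋂ n, G n ∧ s = ⋂ n, closure (G n) := by
  obtain ⟨φ, hφ, rfl⟩ := hs
  set G : ℕ → Set Y := fun n => φ ⁻¹' Metric.ball 0 (1 / (n + 1))
  have hsub (n : ℕ) : φ ⁻¹' {0} ⊆ G n :=
    preimage_mono (singleton_subset_iff.2 (Metric.mem_ball_self (by positivity)))
  have hcl : (⋂ n, closure (G n)) ⊆ φ ⁻¹' {0} := by
    intro x hx
    have hle (n : ℕ) : dist (φ x) 0 ≤ 1 / (n + 1) :=
      closure_minimal (preimage_mono Metric.ball_subset_closedBall)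
        (Metric.isClosed_closedBall.preimage hφ) (mem_iInter.1 hx n)
    refine eq_of_forall_dist_le fun ε hε => ?_
    obtain ⟨n, hn⟩ := exists_nat_one_div_lt hε
    exact (hle n).trans hn.le
  have hG : (⋂ n, G n) ⊆ ⋂ n, closure (G n) := iInter_mono fun n => subset_closure
  refine ⟨G, fun n => Metric.isOpen_ball.preimage hφ,
    fun m n hmn => preimage_mono (Metric.ball_subset_ball (by gcongr)),
    (subset_iInter hsub).antisymm (hG.trans hcl), ((subset_iInter hsub).trans hG).antisymm hcl⟩

end FunClosed

section FunClass

variable {X : Type*} [TopologicalSpace X] {α : Ordinal}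

theorem funMul_zero : FunMul X 0 = {s | FunClosed s} := by
  simp [FunMul, FunClassPair]

theorem funAdd_zero : FunAdd X 0 = {s | FunOpen s} := by
  simp [FunAdd, FunClassPair]

theorem funMul_of_ne_zero (hα : α ≠ 0) :
    FunMul X α = {s | ∃ t : ℕ → Set X, (∀ n, ∃ β < α, t n ∈ FunAdd X β) ∧ s = ⋂ n, t n} := by
  rw [FunMul, FunClassPair, if_neg hα]
  simp only [exists_prop]
  rfl

theorem funAdd_of_ne_zero (hα : α ≠ 0) :
    FunAdd X α = {s | ∃ t : ℕ → Set X, (∀ n, ∃ β < α, t n ∈ FunMul X β) ∧ s = ⋃ n, t n} := by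
  rw [FunAdd, FunClassPair, if_neg hα]
  simp only [exists_prop]
  rfl

theorem compl_mem_funMul_iff {s : Set X} : sᶜ ∈ FunMul X α ↔ s ∈ FunAdd X α := by
  induction α using WellFoundedLT.induction generalizing s with
  | _ α ih =>
  rcases eq_or_ne α 0 with rfl | hα
  · rw [funMul_zero, funAdd_zero]
    rfl
  rw [funMul_of_ne_zero hα, funAdd_of_ne_zero hα]
  constructor
  · rintro ⟨t, ht, hst⟩
    refine ⟨fun n => (t n)ᶜ, fun n => ?_, by rw [← compl_iInter, ← hst, compl_compl]⟩
    obtain ⟨β, hβ, hmem⟩ := ht n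
    exact ⟨β, hβ, (ih β hβ).2 hmem⟩
  · rintro ⟨t, ht, rfl⟩
    refine ⟨fun n => (t n)ᶜ, fun n => ?_, compl_iUnion t⟩
    obtain ⟨β, hβ, hmem⟩ := ht n
    exact ⟨β, hβ, (ih β hβ).1 (by rwa [compl_compl])⟩

theorem iUnion_mem_funAdd_s17 {s : ℕ → Set X} (hs : ∀ n, s n ∈ FunAdd X α) :
    (⋃ n, s n) ∈ FunAdd X α := by
  rcases eq_or_ne α 0 with rfl | hα
  · rw [funAdd_zero] at hs ⊢
    exact FunOpen.iUnion hs
  rw [funAdd_of_ne_zero hα] at hs ⊢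
  choose t ht hst using hs
  refine ⟨fun k => t k.unpair.1 k.unpair.2, fun k => ht _ _, ?_⟩
  rw [Set.iUnion_unpair]
  exact iUnion_congr hst

theorem iInter_mem_funMul_add_one {s : ℕ → Set X} (hs : ∀ n, s n ∈ FunAdd X α) :
    (⋂ n, s n) ∈ FunMul X (α + 1) := by
  rw [funMul_of_ne_zero (by simp)]
  exact ⟨s, fun n => ⟨α, Order.lt_add_one_iff.2 le_rfl, hs n⟩, rfl⟩

end FunClass

theorem preimage_eq_iInter_iUnion_of_tendsto {X Y : Type*} [TopologicalSpace Y]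
    {f : ℕ → X → Y} {g : X → Y}
    (hfg : ∀ x, Filter.Tendsto (fun n => f n x) Filter.atTop (𝓝 (g x)))
    {F : Set Y} {G : ℕ → Set Y} (hG : ∀ n, IsOpen (G n)) (hanti : Antitone G)
    (hFG : F ⊆ ⋂ n, G n) (hGF : (⋂ n, closure (G n)) ⊆ F) :
    g ⁻¹' F = ⋂ n, ⋃ k, ⋃ (_ : n < k), f k ⁻¹' G n := by
  ext x
  simp only [mem_preimage, mem_iInter, mem_iUnion, exists_prop]
  constructor
  · intro hx n
    have hev := (hfg x).eventually_mem ((hG n).mem_nhds (mem_iInter.1 (hFG hx) n))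
    exact (hev.and (Filter.eventually_gt_atTop n)).exists.imp fun k hk => ⟨hk.2, hk.1⟩
  · intro hx
    refine hGF (mem_iInter.2 fun n => mem_closure_of_frequently_of_tendsto ?_ (hfg x))
    refine Filter.frequently_atTop.2 fun m => ?_
    obtain ⟨k, hk, hkG⟩ := hx (max m n)
    exact ⟨k, (le_max_left m n).trans hk.le, hanti (le_max_right m n) hkG⟩

theorem iUnion_gt_preimage_mem_funAdd {X Y : Type*} [TopologicalSpace X] [TopologicalSpace Y]
    {α : Ordinal} {f : ℕ → X → Y} (hf : ∀ n, LebClass α (f n)) {V : Set Y} (hV : IsOpen V)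
    (n : ℕ) : (⋃ k, ⋃ (_ : n < k), f k ⁻¹' V) ∈ FunAdd X α := by
  have h : (⋃ k, ⋃ (_ : n < k), f k ⁻¹' V) = ⋃ k, f (k + (n + 1)) ⁻¹' V := by
    simp_rw [Nat.lt_iff_add_one_le]
    exact iUnion_ge_eq_iUnion_nat_add (fun k => f k ⁻¹' V) (n + 1)
  rw [h]
  exact iUnion_mem_funAdd_s17 fun k => hf _ V hV

theorem stmt17_general {X Y : Type*} [TopologicalSpace X] [TopologicalSpace Y]
    [PerfectlyNormalSpace Y] (α : Ordinal)
    (f : ℕ → X → Y) (g : X → Y) (hf : ∀ n, LebClass α (f n))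
    (hconv : ∀ x, Filter.Tendsto (fun n => f n x) Filter.atTop (nhds (g x))) :
    LebClass (α + 1) g ∧
    ∀ (F : Set Y) (G : ℕ → Set Y), IsClosed F → (∀ n, IsOpen (G n)) → Antitone G →
      F = (⋂ n, G n) → F = (⋂ n, closure (G n)) →
      (g ⁻¹' F = ⋂ n, ⋃ k, ⋃ (_ : n < k), f k ⁻¹' G n) ∧
      g ⁻¹' F ∈ FunMul X (α + 1) := by
  have key (F : Set Y) (G : ℕ → Set Y) (hG : ∀ n, IsOpen (G n)) (hanti : Antitone G)
      (hFG : F = ⋂ n, G n) (hFG' : F = ⋂ n, closure (G n)) :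
      (g ⁻¹' F = ⋂ n, ⋃ k, ⋃ (_ : n < k), f k ⁻¹' G n) ∧ g ⁻¹' F ∈ FunMul X (α + 1) := by
    have heq := preimage_eq_iInter_iUnion_of_tendsto hconv hG hanti hFG.le hFG'.ge
    exact ⟨heq, heq ▸ iInter_mem_funMul_add_one fun n =>
      iUnion_gt_preimage_mem_funAdd hf (hG n) n⟩
  refine ⟨fun V hV => ?_, fun F G _ => key F G⟩
  obtain ⟨G, hG, hanti, hFG, hFG'⟩ := hV.isClosed_compl.funClosed.exists_antitone_isOpen
  rw [← compl_mem_funMul_iff, ← preimage_compl]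
  exact (key _ G hG hanti hFG hFG').2

theorem stmt17 {X Y : Type*} [TopologicalSpace X] [TopologicalSpace Y]
    [PerfectlyNormalSpace Y] (α : Ordinal) (hα : α < ω₁)
    (f : ℕ → X → Y) (g : X → Y) (hf : ∀ n, LebClass α (f n))
    (hconv : ∀ x, Filter.Tendsto (fun n => f n x) Filter.atTop (nhds (g x))) :
    LebClass (α + 1) g ∧
    ∀ (F : Set Y) (G : ℕ → Set Y), IsClosed F → (∀ n, IsOpen (G n)) → Antitone G →
      F = (⋂ n, G n) → F = (⋂ n, closure (G n)) →
      (g ⁻¹' F = ⋂ n, ⋃ k, ⋃ (_ : n < k), f k ⁻¹' G n) ∧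
      g ⁻¹' F ∈ FunMul X (α + 1) :=
  stmt17_general α f g hf hconv
end
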